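/- arXiv:1111.0800 — 13 statements merged into one kernel-verified Lean document; each statement's English description precedes it below -/
import Mathlib

section
/- Let E be a module over a commutative ring with an R-bilinear bracket [·,·], and let I : E → E be a linear map. Define the deformed bracket [X,Y]_I = [IX,Y] + [X,IY] - I[X,Y] and the Nijenhuis torsion T(I)(X,Y) = [IX,IY] - I([X,Y]_I). Then the torsion of I with respect to the deformed bracket satisfies T_{[·,·]_I}(I)(X,Y) = T(I)(IX,Y) + T(I)(X,IY) - I(T(I)(X,Y)) for all X, Y in E. -/
variable {R : Type*} [CommRing R] {E : Type*} [AddCommGroup E] [Module R E]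

/-- The underlying binary operation of a bilinear bracket. -/
def br2 (b : E →ₗ[R] E →ₗ[R] E) : E → E → E := fun x y => b x y

/-- Deformation of a bracket `b` by an endomorphism `I`:
`[X,Y]_I = [IX,Y] + [X,IY] - I [X,Y]`. -/
def deform (I : Module.End R E) (b : E → E → E) : E → E → E :=
  fun X Y => b (I X) Y + b X (I Y) - I (b X Y)

/-- Nijenhuis torsion of `I` with respect to the bracket `b`. -/
def torsion (I : Module.End R E) (b : E → E → E) : E → E → E :=
  fun X Y => b (I X) (I Y) - I (deform I b X Y)

theorem stmt0 (b : E →ₗ[R] E →ₗ[R] E) (I : Module.End R E) (X Y : E) :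
    torsion I (deform I (br2 b)) X Y
      = torsion I (br2 b) (I X) Y + torsion I (br2 b) X (I Y)
        - I (torsion I (br2 b) X Y) := by
  simp only [torsion, deform, br2, map_add, map_sub]; abel
end

section
/- Let E be a module with an R-bilinear bracket [·,·] and I : E → E linear. If the Nijenhuis torsion of I vanishes (T(I) = 0), then the Nijenhuis torsion of I with respect to the k-times deformed bracket [·,·]_{I,…,I} (deforming k successive times by I) also vanishes, for every natural number k. -/
variable {R : Type*} [CommRing R] {E : Type*} [AddCommGroup E] [Module R E]

/-- If the torsion of `I` vanishes for a bracket `b`, it vanishes for the deformed bracket. -/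
lemma torsion_deform_step (I : Module.End R E) (b : E → E → E)
    (h : ∀ X Y : E, torsion I b X Y = 0) (X Y : E) :
    torsion I (deform I b) X Y = 0 := by
  have h' : ∀ X Y : E, b (I X) (I Y) =
      I (b (I X) Y) + I (b X (I Y)) - I (I (b X Y)) := by
    intro X Y
    have h2 := h X Y
    simp only [torsion, deform, map_add, map_sub] at h2
    rw [sub_eq_zero] at h2
    exact h2
  simp only [torsion, deform]
  rw [h' (I X) Y, h' X (I Y), h' X Y]
  simp only [map_add, map_sub]
  abel

theorem stmt1 (b : E →ₗ[R] E →ₗ[R] E) (I : Module.End R E)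
    (h : ∀ X Y : E, torsion I (br2 b) X Y = 0) (k : ℕ) (X Y : E) :
    torsion I ((deform I)^[k] (br2 b)) X Y = 0 := by
  induction k generalizing X Y with
  | zero => exact h X Y
  | succ n ih =>
    rw [Function.iterate_succ_apply']
    exact torsion_deform_step I _ ih X Y
end

section
/- Let E be a module with a bilinear bracket [·,·] and I : E → E linear. For all n ≥ 2 and all X, Y in E, the torsion of the n-th power of I satisfies: T(I^n)(X,Y) = T(I)(I^{n-1}X, I^{n-1}Y) + I(T(I^{n-1})(IX,Y) + T(I^{n-1})(X,IY)) - I^2(T(I^{n-2})(IX,IY)) + I^{2n-2}(T(I)(X,Y)). -/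
variable {R : Type*} [CommRing R] {E : Type*} [AddCommGroup E] [Module R E]

theorem torsion_apply (J : Module.End R E) (b : E → E → E) (X Y : E) :
    torsion J b X Y = b (J X) (J Y) - J (b (J X) Y) - J (b X (J Y)) + (J ^ 2) (b X Y) := by
  simp only [torsion, deform, map_add, map_sub, pow_two, Module.End.mul_apply]
  abel

theorem torsion_pow_add_two (b : E → E → E) (I : Module.End R E) (k : ℕ) (X Y : E) :
    torsion (I ^ (k + 2)) b X Y
      = torsion I b ((I ^ (k + 1)) X) ((I ^ (k + 1)) Y)
        + I (torsion (I ^ (k + 1)) b (I X) Y + torsion (I ^ (k + 1)) b X (I Y))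
        - (I ^ 2) (torsion (I ^ k) b (I X) (I Y))
        + (I ^ (2 * k + 2)) (torsion I b X Y) := by
  -- both sides become signed sums of terms `I ^ r (b (I ^ p X) (I ^ q Y))`
  simp only [torsion_apply, map_add, map_sub, ← Module.End.mul_apply, ← pow_succ, ← pow_succ',
    ← pow_add, ← pow_mul]
  ring_nf
  abel

theorem stmt2 (b : E →ₗ[R] E →ₗ[R] E) (I : Module.End R E) (n : ℕ) (hn : 2 ≤ n) (X Y : E) :
    torsion (I ^ n) (br2 b) X Y
      = torsion I (br2 b) ((I ^ (n - 1)) X) ((I ^ (n - 1)) Y)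
        + I (torsion (I ^ (n - 1)) (br2 b) (I X) Y
              + torsion (I ^ (n - 1)) (br2 b) X (I Y))
        - (I ^ 2) (torsion (I ^ (n - 2)) (br2 b) (I X) (I Y))
        + (I ^ (2 * n - 2)) (torsion I (br2 b) X Y) := by
  obtain ⟨k, rfl⟩ : ∃ k, n = k + 2 := ⟨n - 2, by omega⟩
  rw [show 2 * (k + 2) - 2 = 2 * k + 2 by omega]
  exact torsion_pow_add_two (br2 b) I k X Y
end

section
/- Let E be a module with a bilinear bracket [·,·] and I : E → E a linear map with vanishing Nijenhuis torsion. Then for every natural number n, the n-th power I^n also has vanishing Nijenhuis torsion with respect to [·,·]. -/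
variable {R : Type*} [CommRing R] {E : Type*} [AddCommGroup E] [Module R E]

/-!
Vanishing torsion of `I` says `[IX, IY] = I[IX, Y] + I[X, IY] - I²[X, Y]`. Induction on `n`, then
on `m`, turns this into `[IᵐX, IⁿY] = Iᵐ[X, IⁿY] + Iⁿ[IᵐX, Y] - IᵐIⁿ[X, Y]`, and for `m = n` this
identity is exactly the vanishing of the torsion of `Iⁿ`.
-/

namespace Nijenhuis

theorem apply_apply_eq_of_torsion_eq_zero {I : Module.End R E} {b : E → E → E}
    (hI : ∀ X Y, torsion I b X Y = 0) (X Y : E) :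
    b (I X) (I Y) = I (b (I X) Y) + I (b X (I Y)) - I (I (b X Y)) := by
  rw [sub_eq_zero.mp (hI X Y)]
  simp only [deform, map_add, map_sub]

theorem apply_pow_apply_eq_of_torsion_eq_zero {I : Module.End R E} {b : E → E → E}
    (hI : ∀ X Y, torsion I b X Y = 0) (n : ℕ) (X Y : E) :
    b (I X) ((I ^ n) Y) = I (b X ((I ^ n) Y)) + (I ^ n) (b (I X) Y) - I ((I ^ n) (b X Y)) := by
  induction n with
  | zero => simp
  | succ n ih =>
    rw [pow_succ', Module.End.mul_apply, Module.End.mul_apply, Module.End.mul_apply,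
      apply_apply_eq_of_torsion_eq_zero hI, ih]
    simp only [map_add, map_sub]
    abel

theorem pow_apply_pow_apply_eq_of_torsion_eq_zero {I : Module.End R E} {b : E → E → E}
    (hI : ∀ X Y, torsion I b X Y = 0) (m n : ℕ) (X Y : E) :
    b ((I ^ m) X) ((I ^ n) Y) =
      (I ^ m) (b X ((I ^ n) Y)) + (I ^ n) (b ((I ^ m) X) Y) - (I ^ m) ((I ^ n) (b X Y)) := by
  induction m with
  | zero => simp
  | succ m ih =>
    rw [pow_succ', Module.End.mul_apply, Module.End.mul_apply, Module.End.mul_apply,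
      apply_pow_apply_eq_of_torsion_eq_zero hI, ih]
    simp only [map_add, map_sub]
    abel

theorem torsion_pow_eq_zero {I : Module.End R E} {b : E → E → E}
    (hI : ∀ X Y, torsion I b X Y = 0) (n : ℕ) (X Y : E) :
    torsion (I ^ n) b X Y = 0 := by
  simp only [torsion, deform, pow_apply_pow_apply_eq_of_torsion_eq_zero hI n n, map_add, map_sub]
  abel

end Nijenhuis

theorem stmt3 (b : E →ₗ[R] E →ₗ[R] E) (I : Module.End R E)
    (h : ∀ X Y : E, torsion I (br2 b) X Y = 0) (n : ℕ) (X Y : E) :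
    torsion (I ^ n) (br2 b) X Y = 0 :=
  Nijenhuis.torsion_pow_eq_zero h n X Y
end

section
/- Let E be a module with a bilinear bracket [·,·] and let I, J : E → E be anti-commuting linear maps (I∘J = -J∘I). Define the concomitant C(I,J)(X,Y) = [X,Y]_{I,J} + [X,Y]_{J,I} (sum of the two successive deformations in either order). Then for all n ≥ 1: C(I, I^n∘J)(X,Y) = I(C(I, I^{n-1}∘J)(X,Y)) + 2·T(I)((I^{n-1}∘J)X, Y) + 2·T(I)(X, (I^{n-1}∘J)Y). -/
variable {R : Type*} [CommRing R] {E : Type*} [AddCommGroup E] [Module R E]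

/-- Concomitant `C(I,J)(X,Y) = [X,Y]_{I,J} + [X,Y]_{J,I}`. -/
def conc (I J : Module.End R E) (b : E → E → E) : E → E → E :=
  fun X Y => deform J (deform I b) X Y + deform I (deform J b) X Y

/-! With `K = I ^ (n - 1) * J`, which again anticommutes with `I`, the claim is the identity
`C(I, I K) = I C(I, K) + 2 T(I)(K X, Y) + 2 T(I)(X, K Y)`, valid for any `K` anticommuting with `I`:
expand both sides and move `I` past `K` using `I K = -K I`. -/

theorem mul_pow_mul_anticomm {A : Type*} [Ring A] {a c : A} (h : a * c = -(c * a)) (m : ℕ) :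
    a * (a ^ m * c) = -((a ^ m * c) * a) := by
  rw [← mul_assoc, ← pow_succ', pow_succ, mul_assoc, h, mul_neg, mul_assoc]

theorem conc_mul_left_of_anticomm (b : E →ₗ[R] E →ₗ[R] E) {I K : Module.End R E}
    (h : I * K = -(K * I)) (X Y : E) :
    conc I (I * K) (br2 b) X Y
      = I (conc I K (br2 b) X Y)
        + (2 : ℕ) • torsion I (br2 b) (K X) Y
        + (2 : ℕ) • torsion I (br2 b) X (K Y) := by
  have hx (x : E) : I (K x) = -(K (I x)) := by
    simpa using LinearMap.congr_fun h x
  simp only [conc, deform, torsion, br2, Module.End.mul_apply, hx, map_add, map_sub, map_neg,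
    LinearMap.neg_apply, neg_neg, two_smul]
  abel

theorem stmt5 (b : E →ₗ[R] E →ₗ[R] E) (I J : Module.End R E)
    (hanti : I * J = -(J * I)) (n : ℕ) (hn : 1 ≤ n) (X Y : E) :
    conc I (I ^ n * J) (br2 b) X Y
      = I (conc I (I ^ (n - 1) * J) (br2 b) X Y)
        + (2 : ℕ) • torsion I (br2 b) ((I ^ (n - 1) * J) X) Y
        + (2 : ℕ) • torsion I (br2 b) X ((I ^ (n - 1) * J) Y) := by
  obtain ⟨m, rfl⟩ := Nat.exists_eq_add_of_le' hn
  rw [Nat.add_sub_cancel, pow_succ', mul_assoc]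
  exact conc_mul_left_of_anticomm b (mul_pow_mul_anticomm hanti m) X Y
end

section
/- Let E be a module with a bilinear bracket [·,·] and let I, J : E → E be anti-commuting linear maps such that T(I)(JX,Y) = T(I)(X,JY) = 0 for all X, Y in E, and such that the concomitant C(I,J)(X,Y) = [X,Y]_{I,J} + [X,Y]_{J,I} vanishes. Then for every natural number n, C(I, I^n∘J)(X,Y) = 0 for all X, Y in E. -/
variable {R : Type*} [CommRing R] {E : Type*} [AddCommGroup E] [Module R E]

/-!
Write `T = T(I)`. For `K` anticommuting with `I`, expanding both double deformations gives
`C(I, I K)(X,Y) = I C(I,K)(X,Y) + 2 T(KX,Y) + 2 T(X,KY)`.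
Moreover `I K` again anticommutes with `I`, and `T` vanishes on `(I K)`-images because
`I K X = -K (I X)`. So the hypotheses on `J` pass from `K = I^n J` to `I^(n+1) J`, and
induction on `n` concludes.
-/

section

variable (b : E →ₗ[R] E →ₗ[R] E) (I K : Module.End R E)

lemma Module.End.apply_apply_eq_neg_of_mul_eq_neg {I K : Module.End R E}
    (h : I * K = -(K * I)) (z : E) : I (K z) = -K (I z) := by
  rw [← Module.End.mul_apply, h, LinearMap.neg_apply, Module.End.mul_apply]

lemma torsion_neg_left (u v : E) :
    torsion I (br2 b) (-u) v = -torsion I (br2 b) u v := by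
  simp only [torsion, deform, br2, map_neg, LinearMap.neg_apply, map_add, map_sub]
  abel

lemma torsion_neg_right (u v : E) :
    torsion I (br2 b) u (-v) = -torsion I (br2 b) u v := by
  simp only [torsion, deform, br2, map_neg, map_add, map_sub]
  abel

lemma conc_mul_of_mul_eq_neg (h : I * K = -(K * I)) (X Y : E) :
    conc I (I * K) (br2 b) X Y =
      I (conc I K (br2 b) X Y)
        + (2 : ℤ) • torsion I (br2 b) (K X) Y + (2 : ℤ) • torsion I (br2 b) X (K Y) := by
  simp only [conc, deform, torsion, br2, Module.End.mul_apply,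
    Module.End.apply_apply_eq_neg_of_mul_eq_neg h, map_add, map_sub, map_neg,
    LinearMap.neg_apply]
  abel

structure IsConcFreePair : Prop where
  anticomm : I * K = -(K * I)
  torsion_left : ∀ X Y : E, torsion I (br2 b) (K X) Y = 0
  torsion_right : ∀ X Y : E, torsion I (br2 b) X (K Y) = 0
  conc : ∀ X Y : E, conc I K (br2 b) X Y = 0

variable {b I K}

lemma IsConcFreePair.mul_left (hK : IsConcFreePair b I K) : IsConcFreePair b I (I * K) where
  anticomm := by
    have hKI : K * I = -(I * K) := by rw [hK.anticomm, neg_neg]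
    simp only [mul_assoc, hKI, mul_neg, neg_neg]
  torsion_left X Y := by
    rw [Module.End.mul_apply, Module.End.apply_apply_eq_neg_of_mul_eq_neg hK.anticomm,
      torsion_neg_left, hK.torsion_left, neg_zero]
  torsion_right X Y := by
    rw [Module.End.mul_apply, Module.End.apply_apply_eq_neg_of_mul_eq_neg hK.anticomm,
      torsion_neg_right, hK.torsion_right, neg_zero]
  conc X Y := by
    rw [conc_mul_of_mul_eq_neg b I K hK.anticomm, hK.conc, hK.torsion_left, hK.torsion_right]
    simp only [map_zero, smul_zero, add_zero]

lemma IsConcFreePair.pow_mul (hK : IsConcFreePair b I K) (n : ℕ) :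
    IsConcFreePair b I (I ^ n * K) := by
  induction n with
  | zero => simpa using hK
  | succ n ih => simpa only [pow_succ', mul_assoc] using ih.mul_left

end

theorem stmt6 (b : E →ₗ[R] E →ₗ[R] E) (I J : Module.End R E)
    (hanti : I * J = -(J * I))
    (hT1 : ∀ X Y : E, torsion I (br2 b) (J X) Y = 0)
    (hT2 : ∀ X Y : E, torsion I (br2 b) X (J Y) = 0)
    (hC : ∀ X Y : E, conc I J (br2 b) X Y = 0)
    (n : ℕ) (X Y : E) :
    conc I (I ^ n * J) (br2 b) X Y = 0 :=
  (IsConcFreePair.pow_mul ⟨hanti, hT1, hT2, hC⟩ n).conc X Y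
end

section
/- Let E be a module with a bilinear bracket [·,·] and let I : E → E be a linear map with vanishing Nijenhuis torsion. Then, for every natural number n and all X, Y in E, the bracket deformed once by I^n equals the bracket deformed n successive times by I: [X,Y]_{I^n} = [X,Y]_{I,I,…,I} (n times). -/
variable {R : Type*} [CommRing R] {E : Type*} [AddCommGroup E] [Module R E]

/-- Key identity: if the torsion of `I` vanishes, then
`b(IX, IⁿY) + b(IⁿX, IY) = Iⁿ(deform I b X Y) + I(deform Iⁿ b X Y)`. -/
lemma keyL (b : E →ₗ[R] E →ₗ[R] E) (I : Module.End R E)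
    (h : ∀ X Y : E, torsion I (br2 b) X Y = 0) (n : ℕ) (X Y : E) :
    b (I X) ((I ^ n) Y) + b ((I ^ n) X) (I Y)
      = (I ^ n) (deform I (br2 b) X Y) + I (deform (I ^ n) (br2 b) X Y) := by
  have h' : ∀ U V : E, b (I U) (I V) = I (b (I U) V + b U (I V) - I (b U V)) := by
    intro U V
    have := h U V
    simp only [torsion, deform, br2, sub_eq_zero] at this
    exact this
  induction n with
  | zero => simp [deform, br2, map_add, map_sub]
  | succ n ih =>
    have p : ∀ Z : E, (I ^ (n+1)) Z = I ((I ^ n) Z) := by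
      intro Z; rw [pow_succ']; rfl
    have e1 := h' X ((I ^ n) Y)
    have e2 := h' ((I ^ n) X) Y
    have hI := congrArg I ih
    simp only [deform, br2, p, map_add, map_sub] at e1 e2 hI ⊢
    rw [e1, e2]
    linear_combination (norm := abel) hI

theorem stmt7 (b : E →ₗ[R] E →ₗ[R] E) (I : Module.End R E)
    (h : ∀ X Y : E, torsion I (br2 b) X Y = 0) (n : ℕ) (X Y : E) :
    deform (I ^ n) (br2 b) X Y = (deform I)^[n] (br2 b) X Y := by
  induction n generalizing X Y with
  | zero => simp [deform, br2]
  | succ n ih =>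
    rw [Function.iterate_succ_apply']
    have q : ∀ Z : E, (I ^ n) (I Z) = I ((I ^ n) Z) := by
      intro Z
      rw [show (I ^ n) (I Z) = (I ^ (n+1)) Z from by rw [pow_succ]; rfl,
        pow_succ']; rfl
    have e := keyL b I h n X Y
    show deform (I ^ (n+1)) (br2 b) X Y = deform I ((deform I)^[n] (br2 b)) X Y
    have rIX := ih (I X) Y
    have rIY := ih X (I Y)
    have rXY := ih X Y
    simp only [deform, br2] at *
    rw [← rIX, ← rIY, ← rXY]
    have p : ∀ Z : E, (I ^ (n+1)) Z = I ((I ^ n) Z) := by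
      intro Z; rw [pow_succ']; rfl
    simp only [q, map_add, map_sub] at e
    simp only [p, q, map_add, map_sub]
    linear_combination (norm := abel) (-1 : ℤ) • e
end

section
/- Let E be a module with a bilinear bracket [·,·] and let I : E → E be a linear map. Then for all X, Y in E and all n ∈ ℕ: [X,Y]_{I^{2n+1}} = ([X,Y]_{I^{2n}})_I - Σ_{i+j = 2n-1, 0 ≤ i,j} I^j ( T(I)(I^i X, Y) + T(I)(X, I^i Y) ), where ([·,·]_{I^{2n}})_I denotes the bracket first deformed by I^{2n} and then by I. -/
variable {R : Type*} [CommRing R] {E : Type*} [AddCommGroup E] [Module R E]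

/-!
Put `a i = [I^i X, I Y] - I [I^i X, Y]`. Regrouping the torsion gives
`T(I)(I^i X, Y) = a (i+1) - I (a i)`, so `∑_{i<m} I^(m-1-i) T(I)(I^i X, Y)` telescopes to
`a m - I^m (a 0)`; symmetrically in `Y`. The two telescoped sums add up to exactly
`([X,Y]_{I^m})_I - [X,Y]_{I^(m+1)}`, which is the claim with `m = 2n`.
-/

section Telescoping

variable (I : Module.End R E)

theorem Module.End.sum_range_pow_apply_sub_apply (f : ℕ → E) (m : ℕ) :
    ∑ i ∈ Finset.range m, (I ^ (m - 1 - i)) (f (i + 1) - I (f i)) = f m - (I ^ m) (f 0) := by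
  have hterm : ∀ i ∈ Finset.range m, (I ^ (m - 1 - i)) (f (i + 1) - I (f i))
      = (I ^ (m - (i + 1))) (f (i + 1)) - (I ^ (m - i)) (f i) := by
    intro i hi
    rw [Finset.mem_range] at hi
    rw [show m - i = m - (i + 1) + 1 by omega, pow_succ, Module.End.mul_apply, map_sub,
      show m - 1 - i = m - (i + 1) by omega]
  rw [Finset.sum_congr rfl hterm, Finset.sum_range_sub (fun i => (I ^ (m - i)) (f i))]
  simp

end Telescoping

section Torsion

variable (I : Module.End R E) (b : E → E → E)

theorem torsion_eq_sub_left (X Y : E) :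
    torsion I b X Y = (b (I X) (I Y) - I (b (I X) Y)) - I (b X (I Y) - I (b X Y)) := by
  simp only [torsion, deform, map_sub, map_add]
  abel

theorem torsion_eq_sub_right (X Y : E) :
    torsion I b X Y = (b (I X) (I Y) - I (b X (I Y))) - I (b (I X) Y - I (b X Y)) := by
  simp only [torsion, deform, map_sub, map_add]
  abel

theorem deform_deform_pow_sub_deform_pow_succ (m : ℕ) (X Y : E) :
    deform I (deform (I ^ m) b) X Y - deform (I ^ (m + 1)) b X Y
      = ((b ((I ^ m) X) (I Y) - I (b ((I ^ m) X) Y))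
          - (I ^ m) (b X (I Y) - I (b X Y)))
        + ((b (I X) ((I ^ m) Y) - I (b X ((I ^ m) Y)))
          - (I ^ m) (b (I X) Y - I (b X Y))) := by
  have hcomm (z : E) : I ((I ^ m) z) = (I ^ m) (I z) :=
    (LinearMap.congr_fun (pow_mul_comm' I m) z).symm
  simp only [deform, pow_succ, Module.End.mul_apply, map_add, map_sub, hcomm]
  abel

theorem deform_pow_succ (m : ℕ) (X Y : E) :
    deform (I ^ (m + 1)) b X Y
      = deform I (deform (I ^ m) b) X Y
        - ∑ i ∈ Finset.range m,
            (I ^ (m - 1 - i)) (torsion I b ((I ^ i) X) Y + torsion I b X ((I ^ i) Y)) := by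
  have hleft := I.sum_range_pow_apply_sub_apply
    (fun i => b ((I ^ i) X) (I Y) - I (b ((I ^ i) X) Y)) m
  have hright := I.sum_range_pow_apply_sub_apply
    (fun i => b (I X) ((I ^ i) Y) - I (b X ((I ^ i) Y))) m
  simp only [pow_succ', Module.End.mul_apply, pow_zero, Module.End.one_apply] at hleft hright
  simp only [map_add, Finset.sum_add_distrib, torsion_eq_sub_left I b ((I ^ _) X),
    torsion_eq_sub_right I b X ((I ^ _) Y), hleft, hright,
    ← deform_deform_pow_sub_deform_pow_succ]
  abel

end Torsion

theorem stmt8 (b : E →ₗ[R] E →ₗ[R] E) (I : Module.End R E) (n : ℕ) (X Y : E) :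
    deform (I ^ (2 * n + 1)) (br2 b) X Y
      = deform I (deform (I ^ (2 * n)) (br2 b)) X Y
        - ∑ i ∈ Finset.range (2 * n),
            (I ^ (2 * n - 1 - i))
              (torsion I (br2 b) ((I ^ i) X) Y + torsion I (br2 b) X ((I ^ i) Y)) :=
  deform_pow_succ I (br2 b) (2 * n) X Y
end

section
/- Let E be a module with a bilinear bracket [·,·] and let I : E → E be a linear map with vanishing Nijenhuis torsion. Then for all natural numbers m, n and all X, Y in E: [X,Y]_{I^m, I^n} = [X,Y]_{I^{m+n}}, i.e. deforming successively by I^m and then by I^n equals a single deformation by I^{m+n}. -/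
variable {R : Type*} [CommRing R] {E : Type*} [AddCommGroup E] [Module R E]

/-!
Write `N_{K,L}(X,Y) = [KX,LY] - L[KX,Y] - K[X,LY] + KL[X,Y]`, so that the torsion of `I` is
`N_{I,I}`. Expanding a double deformation gives, for commuting `K` and `L`,
`([·,·]_K)_L = [·,·]_{KL} + N_{K,L} + N_{L,K}`. Moreover `N` satisfies Leibniz-type rules
`N_{KK',L}(X,Y) = N_{K,L}(K'X,Y) + K N_{K',L}(X,Y)` (and similarly in `L`), so `N_{I,I} = 0`
propagates to `N_{I^m,I^n} = 0`.
-/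

def mixedTorsion (K L : Module.End R E) (b : E → E → E) : E → E → E :=
  fun X Y => b (K X) (L Y) - L (b (K X) Y) - K (b X (L Y)) + K (L (b X Y))

section MixedTorsion

variable (K K' L L' : Module.End R E) (b : E → E → E)

theorem torsion_eq_mixedTorsion (I : Module.End R E) : torsion I b = mixedTorsion I I b := by
  ext X Y
  simp only [torsion, deform, mixedTorsion, map_add, map_sub]
  abel

theorem mixedTorsion_one_left : mixedTorsion 1 L b = 0 := by
  ext X Y
  simp [mixedTorsion]

theorem mixedTorsion_one_right : mixedTorsion K 1 b = 0 := by
  ext X Y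
  simp [mixedTorsion]

theorem mixedTorsion_mul_left_apply (X Y : E) :
    mixedTorsion (K * K') L b X Y = mixedTorsion K L b (K' X) Y + K (mixedTorsion K' L b X Y) := by
  simp only [mixedTorsion, Module.End.mul_apply, map_add, map_sub]
  abel

theorem mixedTorsion_mul_right_apply (hKL : Commute K L) (X Y : E) :
    mixedTorsion K (L * L') b X Y = mixedTorsion K L b X (L' Y) + L (mixedTorsion K L' b X Y) := by
  have hKL' : ∀ Z, K (L Z) = L (K Z) := fun Z => congrArg (· Z) hKL.eq
  simp only [mixedTorsion, Module.End.mul_apply, map_add, map_sub, hKL']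
  abel

variable {K L b}

theorem mixedTorsion_pow_left (h : mixedTorsion K L b = 0) (m : ℕ) :
    mixedTorsion (K ^ m) L b = 0 := by
  induction m with
  | zero => exact mixedTorsion_one_left L b
  | succ m ih =>
    ext X Y
    rw [pow_succ, mixedTorsion_mul_left_apply, ih, h]
    simp

theorem mixedTorsion_pow_right (hKL : Commute K L) (h : mixedTorsion K L b = 0) (n : ℕ) :
    mixedTorsion K (L ^ n) b = 0 := by
  induction n with
  | zero => exact mixedTorsion_one_right K b
  | succ n ih =>
    ext X Y
    rw [pow_succ, mixedTorsion_mul_right_apply _ _ _ _ (hKL.pow_right n), ih, h]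
    simp

end MixedTorsion

theorem deform_deform {K L : Module.End R E} (hKL : Commute K L) (b : E → E → E) (X Y : E) :
    deform L (deform K b) X Y =
      deform (K * L) b X Y + mixedTorsion K L b X Y + mixedTorsion L K b X Y := by
  have hKL' : ∀ Z, K (L Z) = L (K Z) := fun Z => congrArg (· Z) hKL.eq
  simp only [deform, mixedTorsion, Module.End.mul_apply, map_add, map_sub, hKL']
  abel

theorem stmt9 (b : E →ₗ[R] E →ₗ[R] E) (I : Module.End R E)
    (h : ∀ X Y : E, torsion I (br2 b) X Y = 0) (m n : ℕ) (X Y : E) :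
    deform (I ^ n) (deform (I ^ m) (br2 b)) X Y = deform (I ^ (m + n)) (br2 b) X Y := by
  have hI : mixedTorsion I I (br2 b) = 0 := by
    rw [← torsion_eq_mixedTorsion]
    exact funext₂ h
  have hpow (p q : ℕ) : mixedTorsion (I ^ p) (I ^ q) (br2 b) = 0 :=
    mixedTorsion_pow_right ((Commute.refl I).pow_left p) (mixedTorsion_pow_left hI p) q
  rw [deform_deform (Commute.pow_pow_self I m n), hpow m n, hpow n m, pow_add]
  simp
end

section
/- Let E be a module with a bilinear bracket [·,·] and let I, J : E → E be anti-commuting linear maps. Then for all X, Y in E: the torsion of J with respect to the bracket deformed by I satisfies T_{[·,·]_I}(J)(X,Y) = -J(C(X,Y)) - T(J)(IX,Y) - T(J)(X,IY) - I(T(J)(X,Y)), where C(X,Y) = [X,Y]_{I,J} + [X,Y]_{J,I} is the concomitant. -/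
/-!
By bilinearity of the bracket and linearity of `I` and `J`, both sides expand into brackets
`[A X, B Y]` of `b` and their images under `I` and `J`. Rewriting every `J ∘ I` as `-(I ∘ J)` brings
both expansions to a common normal form, in which they agree term by term.
-/

variable {R : Type*} [CommRing R] {E : Type*} [AddCommGroup E] [Module R E]

theorem Module.End.apply_apply_eq_neg_of_mul_eq_neg_mul {S M : Type*} [Semiring S]
    [AddCommGroup M] [Module S M] {I J : Module.End S M} (h : I * J = -(J * I)) (x : M) :
    J (I x) = -I (J x) := by
  simpa [Module.End.mul_apply, eq_neg_iff_add_eq_zero, add_comm] using LinearMap.congr_fun h x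

theorem stmt11 (b : E →ₗ[R] E →ₗ[R] E) (I J : Module.End R E)
    (hanti : I * J = -(J * I)) (X Y : E) :
    torsion J (deform I (br2 b)) X Y
      = -J (conc I J (br2 b) X Y)
        - torsion J (br2 b) (I X) Y - torsion J (br2 b) X (I Y)
        - I (torsion J (br2 b) X Y) := by
  simp only [torsion, deform, conc, br2, map_add, map_sub, map_neg, LinearMap.neg_apply,
    Module.End.apply_apply_eq_neg_of_mul_eq_neg_mul hanti]
  abel
end

section
/- Let L be a graded Lie algebra with a degree -2 bracket {·,·}, with elements Θ (degree 3) and I, J (degree 2), so that all iterated brackets below make sense and elements of degree 3 commute symmetrically. Define Θ_{A,B} := {B,{A,Θ}} and C(I,J) := Θ_{I,J} + Θ_{J,I}. Then Θ_{J,I,J} = (1/3)(Θ_{J,J,I} + Θ_{{J,{I,J}}} + {J, C(I,J)}), where Θ_{{J,{I,J}}} := {{J,{I,J}}, Θ} with appropriate sign conventions, i.e. the deformation of Θ by the element {J,{I,J}}. -/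
theorem stmt17 {K : Type*} [Field K] (h3 : (3 : K) ≠ 0)
    {L : Type*} [AddCommGroup L] [Module K L]
    (br : L →ₗ[K] L →ₗ[K] L) (Θ I J : L)
    (hI : ∀ a b : L, br I (br a b) = br (br I a) b + br a (br I b))
    (hJ : ∀ a b : L, br J (br a b) = br (br J a) b + br a (br J b)) :
    br J (br I (br J Θ))
      = (3 : K)⁻¹ • (br I (br J (br J Θ)) + br (br J (br I J)) Θ
          + br J (br J (br I Θ) + br I (br J Θ))) := by
  have e1 : br I (br J (br J Θ)) = br (br I J) (br J Θ) + br J (br I (br J Θ)) :=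
    hI J (br J Θ)
  have e2 : br J (br (br I J) Θ) = br (br J (br I J)) Θ + br (br I J) (br J Θ) :=
    hJ (br I J) Θ
  have e3 : br J (br I (br J Θ))
      = br J (br (br I J) Θ) + br J (br J (br I Θ)) := by
    have := congrArg (br J) (hI J Θ)
    simpa [map_add] using this
  have hT : br J (br I (br J Θ))
      = br (br J (br I J)) Θ + br (br I J) (br J Θ) + br J (br J (br I Θ)) := by
    rw [e3, e2]
  rw [map_add, eq_inv_smul_iff₀ h3,
    show (3 : K) = 1 + 1 + 1 by norm_num, add_smul, add_smul, one_smul]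
  rw [e1]
  nth_rewrite 1 [hT]
  abel
end

section
/- Let L be a graded Lie algebra with a degree -2 bracket, Θ a degree-3 element, and I, J degree-2 elements. With notation Θ_{A,B} := {B,{A,Θ}} and C(I,J) := Θ_{I,J} + Θ_{J,I}, one has C_{Θ_I}(I,J) = C_Θ(I, {J,I}) + {I, C_Θ(I,J)}, where Θ_I := {I,Θ} and C_{Θ_I}(I,J) := (Θ_I)_{I,J} + (Θ_I)_{J,I}. -/
theorem stmt18 {K : Type*} [CommRing K] {L : Type*} [AddCommGroup L] [Module K L]
    (br : L →ₗ[K] L →ₗ[K] L) (Θ I J : L)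
    (hI : ∀ a b : L, br I (br a b) = br (br I a) b + br a (br I b))
    (hJ : ∀ a b : L, br J (br a b) = br (br J a) b + br a (br J b)) :
    br J (br I (br I Θ)) + br I (br J (br I Θ))
      = (br (br J I) (br I Θ) + br I (br (br J I) Θ))
        + br I (br J (br I Θ) + br I (br J Θ)) := by
  simp only [hJ I (br I Θ), hJ I Θ, map_add]
  abel
end

section
/- Let L be a graded Lie algebra with a degree -2 bracket, Θ a degree-3 element, and I, J degree-2 elements that anti-commute in the sense {J,I} = 2 I∘J interpreted as: there is an element P := (1/2){J,I} with {I, P} = 0 (equivalently I∘(I∘J) = (I∘J)∘I when realized as endomorphisms). Under the assumption {I, {J,{J,I}}} = 0, one has, for all natural numbers r, s with r+s = k: {I,…{I, {{J,{I,J}}, Θ_r}}…} (s nested {I,·}) = {I,…{I,{{J,{I,J}}, Θ}}…} (k nested {I,·}), where Θ_r denotes Θ deformed r times by I. -/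
theorem stmt19 {K : Type*} [CommRing K] {L : Type*} [AddCommGroup L] [Module K L]
    (br : L →ₗ[K] L →ₗ[K] L) (Θ I J : L)
    (hI : ∀ a b : L, br I (br a b) = br (br I a) b + br a (br I b))
    (hskew : br I J = - br J I)
    (h0 : br I (br J (br J I)) = 0)
    (k r s : ℕ) (hrs : r + s = k) :
    (fun x => br I x)^[s] (br (br J (br I J)) ((fun x => br I x)^[r] Θ))
      = (fun x => br I x)^[k] (br (br J (br I J)) Θ) := by
  have hIP : br I (br J (br I J)) = 0 := by
    rw [hskew, map_neg, map_neg, h0, neg_zero]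
  have hcomm : ∀ x : L, br I (br (br J (br I J)) x) = br (br J (br I J)) (br I x) := by
    intro x
    rw [hI, hIP]
    simp
  have key : ∀ (n : ℕ) (x : L),
      br (br J (br I J)) ((fun y => br I y)^[n] x)
        = (fun y => br I y)^[n] (br (br J (br I J)) x) := by
    intro n
    induction n with
    | zero => intro x; simp
    | succ m ih =>
      intro x
      rw [Function.iterate_succ_apply, Function.iterate_succ_apply, ih, hcomm]
  rw [key, ← Function.iterate_add_apply, Nat.add_comm s r, hrs]
end
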